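/- Let G and H be finite simple graphs on the same vertex set V, and suppose that for every edge (u,v) of G there is a u–v path in H using at most t vertices. Let S ⊆ V and let S' = { u ∈ V : there exists s ∈ S and a u–s path in H with at most t vertices }. Then for every edge (a,b) of G with a,b ∉ S', the vertices a and b lie in the same connected component of H − S. -/
import Mathlib

lemma reachable_induce_of_walk {V : Type*} (H : SimpleGraph V) (S : Set V) :
    ∀ {a b : V} (p : H.Walk a b), (∀ x ∈ p.support, x ∉ S) →
      ∀ (ha : a ∉ S) (hb : b ∉ S),
        (H.induce Sᶜ).Reachable ⟨a, ha⟩ ⟨b, hb⟩ := by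
  intro a b p
  induction p with
  | nil => intro _ ha hb; rfl
  | cons h q ih =>
    intro hsup ha hb
    have hc := hsup _ (by
      rw [SimpleGraph.Walk.support_cons]
      exact List.mem_cons_of_mem _ q.start_mem_support)
    refine ((SimpleGraph.Adj.reachable ?_).trans
      (ih (fun x hx => hsup x (by simp [SimpleGraph.Walk.support_cons, hx])) hc hb))
    exact h

theorem same_component_outside_expanded_separator {V : Type*} [Fintype V]
    (G H : SimpleGraph V) (t : ℕ)
    (hpath : ∀ u v, G.Adj u v →
      ∃ p : H.Walk u v, p.IsPath ∧ p.support.length ≤ t)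
    (S : Set V)
    (S' : Set V)
    (hS' : S' = {u | ∃ s ∈ S, ∃ p : H.Walk u s, p.IsPath ∧ p.support.length ≤ t}) :
    ∀ a b, G.Adj a b → a ∉ S' → b ∉ S' →
      ∃ (ha : a ∉ S) (hb : b ∉ S),
        (H.induce Sᶜ).Reachable ⟨a, ha⟩ ⟨b, hb⟩ := by
  classical
  intro a b hab haS' hbS'
  obtain ⟨p, hp, hlen⟩ := hpath a b hab
  -- every vertex of p is outside S
  have hsup : ∀ x ∈ p.support, x ∉ S := by
    intro x hx hxS
    apply haS'
    rw [hS']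
    refine ⟨x, hxS, p.takeUntil x hx, hp.takeUntil hx, ?_⟩
    have h1 : (p.takeUntil x hx).length ≤ p.length := p.length_takeUntil_le hx
    have h2 : (p.takeUntil x hx).support.length = (p.takeUntil x hx).length + 1 :=
      SimpleGraph.Walk.length_support _
    have h3 : p.support.length = p.length + 1 := SimpleGraph.Walk.length_support _
    omega
  have ha : a ∉ S := hsup a p.start_mem_support
  have hb : b ∉ S := hsup b p.end_mem_support
  exact ⟨ha, hb, reachable_induce_of_walk H S p hsup ha hb⟩
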